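/- arXiv:1901.05829 — 2 statements merged into one kernel-verified Lean document; each statement's English description precedes it below -/
import Mathlib

section
/- Let q be a positive integer and r = (r₁,…,r_{q−1}) ∈ ℕ₀^{q−1} with r₁ = max r. If 𝒲^{(q)}_r ≠ ∅, then max r ≤ |r|_q. -/
/-!
The partial sums of a `q'`-cumulative composition `δ` avoid every multiple of `q`. Its parts are
smaller than `q`, so each multiple of `q` below `Σ δ` is jumped over by a part `≥ 2`: a part `1`
would land on it. Hence `Σ δ ≤ q · #{parts ≥ 2} + (q - 1)`, which for `δ ∈ 𝒲^{(q)}_r` reads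
`r₁ + Σ_{i ≥ 2} i r_i ≤ Σ_{i ≥ 2} q r_i + (q - 1)`, i.e. `r₁ ≤ |r|_q`. For `i ≥ 2` the bound
`r_i ≤ |r|_q` holds because `r_i` occurs in `|r|_q` with coefficient `q - i ≥ 1`.
-/

open Finset

/-- A composition: a list of positive natural numbers. -/
def IsComposition (δ : List ℕ) : Prop := ∀ x ∈ δ, 0 < x

/-- `δ` is `q'`-cumulative: no partial sum of `δ` (including the total sum, so
that the empty composition is excluded) is divisible by `q`. -/
def QCum (q : ℕ) (δ : List ℕ) : Prop :=
  ¬ q ∣ δ.sum ∧ ∀ j, 1 ≤ j → j ≤ δ.length → ¬ q ∣ (δ.take j).sum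

/-- The partition `((q-1)^{r (q-1)}, …, 2^{r 2}, 1^{r 1})` as a multiset. -/
def muOf (q : ℕ) (r : ℕ → ℕ) : Multiset ℕ :=
  ∑ i ∈ Finset.Ico 1 q, Multiset.replicate (r i) i

/-- `𝒲^{(q)}_r`: the set of `q'`-cumulative compositions which rearrange to the
partition `((q-1)^{r (q-1)}, …, 2^{r 2}, 1^{r 1})`. -/
def W (q : ℕ) (r : ℕ → ℕ) : Set (List ℕ) :=
  {δ | (↑δ : Multiset ℕ) = muOf q r ∧ QCum q δ}

/-- `r_j(λ)`: the number of parts `i ≥ 1` of `λ` with `i ≡ j (mod q)`. -/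
def rres (q : ℕ) (lam : Multiset ℕ) (j : ℕ) : ℕ :=
  Multiset.card (lam.filter fun i => 1 ≤ i ∧ i % q = j)

/-- `c^{(q)}_λ`: the number of `q'`-cumulative compositions rearranging to `λ`. -/
noncomputable def cnum (q : ℕ) (lam : Multiset ℕ) : ℕ :=
  Nat.card {δ : List ℕ // (↑δ : Multiset ℕ) = lam ∧ QCum q δ}

/-- `‖r‖ = ∑_{i=1}^{q-1} i·r_i`. -/
def normk (q : ℕ) (r : ℕ → ℕ) : ℕ := ∑ i ∈ Finset.Ico 1 q, i * r i

/-- `|r|_q = (q-1) + ∑_{i=2}^{q-1} (q-i)·r_i`. -/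
def absq (q : ℕ) (r : ℕ → ℕ) : ℕ := (q - 1) + ∑ i ∈ Finset.Ico 2 q, (q - i) * r i

/-- `max r = max{r_1, …, r_{q-1}}`. -/
def maxr (q : ℕ) (r : ℕ → ℕ) : ℕ := (Finset.Ico 1 q).sup r

theorem List.sum_le_mul_countP_of_forall_take_not_dvd {q : ℕ} (δ : List ℕ)
    (hle : ∀ x ∈ δ, x ≤ q)
    (hpre : ∀ j, 1 ≤ j → j ≤ δ.length → ¬ q ∣ (δ.take j).sum) :
    δ.sum ≤ q * δ.countP (2 ≤ ·) + (q - 1) := by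
  induction δ using List.reverseRecOn with
  | nil => simp
  | append_singleton δ a ih =>
    have ih := ih (fun x hx => hle x (by simp [hx])) fun j hj hjδ => by
      simpa [List.take_append_of_le_length hjδ] using hpre j hj (by simp; omega)
    have ha : a ≤ q := hle a (by simp)
    have hlast : ¬ q ∣ δ.sum + a := by simpa using hpre (δ.length + 1) (by omega) (by simp)
    simp only [List.sum_append, List.sum_singleton, List.countP_append, List.countP_singleton]
    rcases Nat.lt_or_ge a 2 with ha2 | ha2
    · have hne : δ.sum + a ≠ q * (δ.countP (2 ≤ ·) + 1) := fun heq =>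
        hlast (heq ▸ Dvd.intro _ rfl)
      rw [mul_add_one] at hne
      simp only [decide_eq_true_eq, show ¬ 2 ≤ a by omega, if_false, add_zero]
      omega
    · simp only [decide_eq_true_eq, ha2, if_true, mul_add_one]
      omega

theorem lt_of_mem_muOf {q : ℕ} {r : ℕ → ℕ} {x : ℕ} (hx : x ∈ muOf q r) : x < q := by
  obtain ⟨i, hi, hxi⟩ := Multiset.mem_sum.mp hx
  rw [Multiset.eq_of_mem_replicate hxi]
  exact (mem_Ico.mp hi).2

theorem sum_muOf (q : ℕ) (r : ℕ → ℕ) : (muOf q r).sum = normk q r := by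
  simp [muOf, normk, Multiset.sum_sum, Multiset.sum_replicate, mul_comm]

theorem countP_muOf (q : ℕ) (r : ℕ → ℕ) (p : ℕ → Prop) [DecidablePred p] :
    (muOf q r).countP p = ∑ i ∈ Ico 1 q with p i, r i := by
  rw [muOf, ← Multiset.coe_countPAddMonoidHom, map_sum, sum_filter]
  refine sum_congr rfl fun i _ => ?_
  rw [Multiset.coe_countPAddMonoidHom]
  by_cases hi : p i
  · rw [if_pos hi, Multiset.countP_eq_card.mpr fun a ha => Multiset.eq_of_mem_replicate ha ▸ hi,
      Multiset.card_replicate]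
  · rw [if_neg hi, Multiset.countP_eq_zero.mpr fun a ha => Multiset.eq_of_mem_replicate ha ▸ hi]

theorem one_lt_of_mem_W {q : ℕ} {r : ℕ → ℕ} {δ : List ℕ} (hδ : δ ∈ W q r) : 1 < q := by
  obtain ⟨hmu, hsum, -⟩ := hδ
  rcases Nat.lt_or_ge q 2 with hq | hq
  · interval_cases q
    · have : δ = [] := by simpa [muOf] using hmu
      simp [this] at hsum
    · exact absurd (one_dvd _) hsum
  · exact hq

theorem r_one_le_absq_of_mem_W {q : ℕ} {r : ℕ → ℕ} {δ : List ℕ} (hδ : δ ∈ W q r) :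
    r 1 ≤ absq q r := by
  have hq := one_lt_of_mem_W hδ
  obtain ⟨hmu, -, hpre⟩ := hδ
  have hbound := δ.sum_le_mul_countP_of_forall_take_not_dvd
    (fun x hx => (lt_of_mem_muOf (hmu ▸ Multiset.mem_coe.mpr hx)).le) hpre
  have hsum : δ.sum = r 1 + ∑ i ∈ Ico 2 q, i * r i := by
    rw [← Multiset.sum_coe, hmu, sum_muOf, normk, sum_eq_sum_Ico_succ_bot hq, one_mul]
  have hcount : δ.countP (2 ≤ ·) = ∑ i ∈ Ico 2 q, r i := by
    rw [← Multiset.coe_countP, hmu, countP_muOf]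
    congr 1
    ext i
    simp only [mem_filter, mem_Ico]
    omega
  have hsplit : q * ∑ i ∈ Ico 2 q, r i
      = ∑ i ∈ Ico 2 q, (q - i) * r i + ∑ i ∈ Ico 2 q, i * r i := by
    rw [mul_sum, ← sum_add_distrib]
    refine sum_congr rfl fun i hi => ?_
    rw [← add_mul, Nat.sub_add_cancel (mem_Ico.mp hi).2.le]
  rw [hsum, hcount, hsplit] at hbound
  rw [absq]
  omega

theorem le_absq {q i : ℕ} (r : ℕ → ℕ) (hi : i ∈ Ico 2 q) : r i ≤ absq q r :=
  calc r i ≤ (q - i) * r i := Nat.le_mul_of_pos_left _ (Nat.sub_pos_of_lt (mem_Ico.mp hi).2)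
    _ ≤ ∑ i ∈ Ico 2 q, (q - i) * r i :=
      single_le_sum (f := fun i => (q - i) * r i) (fun _ _ => Nat.zero_le _) hi
    _ ≤ absq q r := Nat.le_add_left _ _

theorem stmt8_general (q : ℕ) (r : ℕ → ℕ)
    (h : (W q r).Nonempty) : maxr q r ≤ absq q r := by
  obtain ⟨δ, hδ⟩ := h
  refine Finset.sup_le fun i hi => ?_
  rcases (mem_Ico.mp hi).1.eq_or_lt with rfl | hi2
  · exact r_one_le_absq_of_mem_W hδ
  · exact le_absq r (mem_Ico.mpr ⟨hi2, (mem_Ico.mp hi).2⟩)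

/-- Lemma 1, forward direction: if `r₁ = max r` and `𝒲^{(q)}_r ≠ ∅` then
`max r ≤ |r|_q`. -/
theorem stmt8 (q : ℕ) (hq : 0 < q) (r : ℕ → ℕ) (hr : r 1 = maxr q r)
    (h : (W q r).Nonempty) : maxr q r ≤ absq q r :=
  stmt8_general q r h
end

section
/- Let q be a positive integer, a multiplicatively invertible in ℤ/qℤ, and r = (r₁,…,r_{q−1}) ∈ ℕ₀^{q−1}. The map φ sending δ = (δ₁,…,δ_s) ∈ 𝒲^{(q)}_r to δ′ = (δ′₁,…,δ′_s), where 1 ≤ δ′_t ≤ q−1 and δ′_t ≡ a·δ_t (mod q) for all 1 ≤ t ≤ s, is a well-defined bijection from 𝒲^{(q)}_r onto 𝒲^{(q)}_{ᵃr}. -/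
/-!
Multiplication by a unit `a` of `ℤ/qℤ` permutes the residues `1, …, q-1`, so reducing each part
of `δ ∈ 𝒲^{(q)}_r` turns the partition of type `r` into one of type `ᵃr`. The partial sums of
the image are `a` times those of `δ` modulo `q`, so none of them is divisible by `q` either.
Multiplying by an inverse `b` of `a` modulo `q` undoes the map part by part.
-/

open Finset

/-- `r' = ᵃr`. -/
def IsTwist (q a : ℕ) (r r' : ℕ → ℕ) : Prop :=
  ∀ i j, 1 ≤ i → i ≤ q - 1 → 1 ≤ j → j ≤ q - 1 → j % q = a * i % q → r' j = r i

theorem Nat.exists_mul_modEq_one_of_coprime {a q : ℕ} (ha : a.Coprime q) :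
    ∃ b, a * b ≡ 1 [MOD q] := by
  rcases eq_or_ne q 0 with rfl | hq
  · exact ⟨1, by rw [(Nat.coprime_zero_right a).mp ha]⟩
  · obtain ⟨b, -, hb⟩ := Nat.exists_mul_mod_eq_of_coprime 1 ha hq
    exact ⟨b, hb⟩

section MulMod

variable {q a b : ℕ}

theorem mul_mod_mem_Ico (ha : a.Coprime q) {x : ℕ} (hx : x ∈ Ico 1 q) :
    a * x % q ∈ Ico 1 q := by
  rw [mem_Ico] at hx ⊢
  refine ⟨Nat.pos_of_ne_zero fun h => ?_, Nat.mod_lt _ (by omega)⟩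
  have hqx : q ∣ x := ha.symm.dvd_of_dvd_mul_left (Nat.dvd_of_mod_eq_zero h)
  exact absurd (Nat.eq_zero_of_dvd_of_lt hqx hx.2) (by omega)

theorem mul_mod_mul_mod_of_mul_modEq_one (hab : a * b ≡ 1 [MOD q]) {x : ℕ} (hx : x < q) :
    b * (a * x % q) % q = x := by
  have h : b * (a * x % q) ≡ x [MOD q] :=
    calc b * (a * x % q) ≡ b * (a * x) [MOD q] := (Nat.mod_modEq _ q).mul_left b
      _ = (a * b) * x := by ring
      _ ≡ 1 * x [MOD q] := hab.mul_right x
      _ = x := one_mul x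
  rwa [Nat.ModEq, Nat.mod_eq_of_lt hx] at h

theorem sum_map_mul_mod_modEq (l : List ℕ) :
    (l.map fun x => a * x % q).sum ≡ a * l.sum [MOD q] := by
  induction l with
  | nil => rfl
  | cons x l ih =>
    simp only [List.map_cons, List.sum_cons, Nat.mul_add]
    exact (Nat.mod_modEq (a * x) q).add ih

theorem IsTwist.symm {r r' : ℕ → ℕ} (hab : a * b ≡ 1 [MOD q]) (h : IsTwist q a r r') :
    IsTwist q b r' r := by
  intro i j hi hi' hj hj' hji
  refine (h j i hj hj' hi hi' ?_).symm
  calc i ≡ 1 * i [MOD q] := by rw [one_mul]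
    _ ≡ (a * b) * i [MOD q] := (hab.mul_right i).symm
    _ = a * (b * i) := mul_assoc a b i
    _ ≡ a * j [MOD q] := (Nat.ModEq.mul_left a hji).symm

end MulMod

theorem not_dvd_sum_map_mul_mod {q a : ℕ} (ha : a.Coprime q) {l : List ℕ} (hl : ¬ q ∣ l.sum) :
    ¬ q ∣ (l.map fun x => a * x % q).sum := fun hd =>
  hl <| ha.symm.dvd_of_dvd_mul_left <| (Nat.modEq_zero_iff_dvd).mp <|
    (sum_map_mul_mod_modEq l).symm.trans ((Nat.modEq_zero_iff_dvd).mpr hd)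

theorem QCum.map_mul_mod {q a : ℕ} (ha : a.Coprime q) {δ : List ℕ} (h : QCum q δ) :
    QCum q (δ.map fun x => a * x % q) := by
  refine ⟨not_dvd_sum_map_mul_mod ha h.1, fun j hj hjl => ?_⟩
  rw [← List.map_take]
  exact not_dvd_sum_map_mul_mod ha (h.2 j hj (by simpa using hjl))

section CumulativeCompositions

variable {q a b : ℕ} {r r' : ℕ → ℕ}

theorem mem_Ico_of_mem_muOf {x : ℕ} (hx : x ∈ muOf q r) : x ∈ Ico 1 q := by
  obtain ⟨i, hi, hxi⟩ := Multiset.mem_sum.mp hx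
  rwa [Multiset.eq_of_mem_replicate hxi]

theorem mem_Ico_of_mem_W {δ : List ℕ} (hδ : δ ∈ W q r) {x : ℕ} (hx : x ∈ δ) : x ∈ Ico 1 q :=
  mem_Ico_of_mem_muOf (hδ.1 ▸ Multiset.mem_coe.mpr hx)

theorem map_mul_mod_muOf (hab : a * b ≡ 1 [MOD q]) (h : IsTwist q a r r') :
    (muOf q r).map (fun x => a * x % q) = muOf q r' := by
  have hba : b * a ≡ 1 [MOD q] := by rwa [mul_comm]
  have ha := Nat.coprime_of_mul_modEq_one b hab
  rw [muOf, ← Multiset.coe_mapAddMonoidHom, map_sum]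
  simp only [Multiset.coe_mapAddMonoidHom, Multiset.map_replicate]
  refine sum_nbij' (fun i => a * i % q) (fun j => b * j % q)
    (fun i hi => mul_mod_mem_Ico ha hi)
    (fun j hj => mul_mod_mem_Ico (Nat.coprime_of_mul_modEq_one a hba) hj)
    (fun i hi => mul_mod_mul_mod_of_mul_modEq_one hab (mem_Ico.mp hi).2)
    (fun j hj => mul_mod_mul_mod_of_mul_modEq_one hba (mem_Ico.mp hj).2)
    (fun i hi => ?_)
  have hi' := mem_Ico.mp hi
  have hai := mem_Ico.mp (mul_mod_mem_Ico ha hi)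
  rw [h i _ hi'.1 (by omega) hai.1 (by omega) (Nat.mod_mod _ _)]

theorem mapsTo_map_mul_mod_W (hab : a * b ≡ 1 [MOD q]) (h : IsTwist q a r r') :
    Set.MapsTo (List.map fun x => a * x % q) (W q r) (W q r') := fun δ hδ =>
  ⟨by rw [← Multiset.map_coe, hδ.1, map_mul_mod_muOf hab h],
    hδ.2.map_mul_mod (Nat.coprime_of_mul_modEq_one b hab)⟩

theorem map_mul_mod_map_mul_mod_of_mem_W (hab : a * b ≡ 1 [MOD q]) {δ : List ℕ}
    (hδ : δ ∈ W q r) : ((δ.map fun x => a * x % q).map fun y => b * y % q) = δ := by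
  rw [List.map_map]
  exact (List.map_congr_left fun x hx =>
    mul_mod_mul_mod_of_mul_modEq_one hab (mem_Ico.mp (mem_Ico_of_mem_W hδ hx)).2).trans
    (List.map_id' δ)

end CumulativeCompositions

/-- For parts `x` of elements of `𝒲^{(q)}_r` one has `1 ≤ x ≤ q-1`, so `a * x % q` is the
representative in `[1, q-1]` of `a·x`. -/
theorem stmt11_general (q : ℕ) (a : ℕ) (ha : Nat.Coprime a q)
    (r r' : ℕ → ℕ)
    (hr' : ∀ i j, 1 ≤ i → i ≤ q - 1 → 1 ≤ j → j ≤ q - 1 →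
      j % q = a * i % q → r' j = r i) :
    Set.BijOn (fun δ : List ℕ => δ.map fun x => a * x % q) (W q r) (W q r') := by
  obtain ⟨b, hab⟩ := Nat.exists_mul_modEq_one_of_coprime ha
  have hba : b * a ≡ 1 [MOD q] := by rwa [mul_comm]
  have htwist : IsTwist q a r r' := hr'
  exact Set.InvOn.bijOn
    ⟨fun δ hδ => map_mul_mod_map_mul_mod_of_mem_W hab hδ,
      fun δ hδ => map_mul_mod_map_mul_mod_of_mem_W hba hδ⟩
    (mapsTo_map_mul_mod_W hab htwist)
    (mapsTo_map_mul_mod_W hba (htwist.symm hab))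

/-- The map `δ ↦ δ'` with `δ'_t` the unique element of `[1, q-1]` congruent to
`a·δ_t (mod q)` is a well-defined bijection `𝒲^{(q)}_r → 𝒲^{(q)}_{ᵃr}`.
(For parts `x` of elements of `𝒲^{(q)}_r` one has `1 ≤ x ≤ q-1`, so this
image is exactly `a·x % q`.) -/
theorem stmt11 (q : ℕ) (hq : 0 < q) (a : ℕ) (ha : Nat.Coprime a q)
    (r r' : ℕ → ℕ)
    (hr' : ∀ i j, 1 ≤ i → i ≤ q - 1 → 1 ≤ j → j ≤ q - 1 →
      j % q = a * i % q → r' j = r i) :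
    Set.BijOn (fun δ : List ℕ => δ.map fun x => a * x % q) (W q r) (W q r') :=
  stmt11_general q a ha r r' hr'
end
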